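/- arXiv:1402.3283 — 2 statements merged into one kernel-verified Lean document; each statement's English description precedes it below -/
import Mathlib

section
/- Fix i, z ∈ V and let s be a sandpile with z-recurrent decomposition s = ρ + m·δ_z + Δv. Let u be the odometer of s + δ_i with respect to S (with u ≡ 0 if s + δ_i is not stabilizable), and let û be the odometer of ρ + δ_i with respect to S_z. Then the z-recurrent decomposition of a_i s is a_i s = â_i ρ + (m + β)·δ_z + Δ(v + u − û − u(z)), where β = av_{i→z}(â_i ρ) is the burst size. -/
open scoped BigOperators
open Classical Filter

noncomputable section

namespace ThresholdState

variable {V : Type*} [Fintype V] [DecidableEq V]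

/-- `A i j` is the number of directed edges from `i` to `j`. -/
def outdeg (A : V → V → ℕ) (i : V) : ℕ := ∑ j, A i j

def indeg (A : V → V → ℕ) (i : V) : ℕ := ∑ j, A j i

/-- Eulerian: out-degree equals in-degree at every vertex. -/
def Eulerian (A : V → V → ℕ) : Prop := ∀ i, outdeg A i = indeg A i

/-- (Strongly) connected multigraph. -/
def Connected (A : V → V → ℕ) : Prop :=
  ∀ i j : V, Relation.ReflTransGen (fun a b => 0 < A a b) i j

def deg (A : V → V → ℕ) (i : V) : ℕ := outdeg A i

/-- Graph Laplacian: `Δu(i) = -deg(i)·u(i) + Σ_{e incoming to i} u(e⁻)`. -/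
def lap (A : V → V → ℕ) (u : V → ℤ) (i : V) : ℤ :=
  -(deg A i : ℤ) * u i + ∑ j, (A j i : ℤ) * u j

def delta (z : V) : V → ℤ := fun j => if j = z then 1 else 0

/-- Toppling vertex `i`: replace `s` by `s + Δδ_i`. -/
def toppleAt (A : V → V → ℕ) (s : V → ℤ) (i : V) : V → ℤ :=
  fun j => s j + lap A (delta i) j

def applySeq (A : V → V → ℕ) (s : V → ℤ) (l : List V) : V → ℤ :=
  l.foldl (toppleAt A) s

/-- A legal toppling sequence (avoiding the forbidden set `F`): each toppled
vertex is unstable when toppled and does not lie in `F`. -/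
def ValidSeq (A : V → V → ℕ) (F : V → Prop) : (V → ℤ) → List V → Prop
  | _, [] => True
  | s, i :: l => ¬ F i ∧ (deg A i : ℤ) ≤ s i ∧ ValidSeq A F (toppleAt A s i) l

/-- Stable at every non-forbidden vertex. -/
def StableOff (A : V → V → ℕ) (F : V → Prop) (s : V → ℤ) : Prop :=
  ∀ i, ¬ F i → s i ≤ (deg A i : ℤ) - 1

def StabilizesTo (A : V → V → ℕ) (F : V → Prop) (s : V → ℤ) (l : List V) : Prop :=
  ValidSeq A F s l ∧ StableOff A F (applySeq A s l)

def StabilizableVia (A : V → V → ℕ) (F : V → Prop) (s : V → ℤ) : Prop :=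
  ∃ l, StabilizesTo A F s l

/-- Stabilizable with no forbidden vertices. -/
def Stabilizable (A : V → V → ℕ) (s : V → ℤ) : Prop :=
  StabilizableVia A (fun _ => False) s

def stabSeq (A : V → V → ℕ) (F : V → Prop) (s : V → ℤ) : List V :=
  if h : StabilizableVia A F s then h.choose else []

def stabilizeVia (A : V → V → ℕ) (F : V → Prop) (s : V → ℤ) : V → ℤ :=
  applySeq A s (stabSeq A F s)

/-- Odometer: number of topplings at each vertex (`0` everywhere if not stabilizable). -/
def odometerVia (A : V → V → ℕ) (F : V → Prop) (s : V → ℤ) : V → ℕ :=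
  fun i => (stabSeq A F s).count i

def sinkStabilize (A : V → V → ℕ) (z : V) (s : V → ℤ) : V → ℤ :=
  stabilizeVia A (fun i => i = z) s

def sinkOdometer (A : V → V → ℕ) (z : V) (s : V → ℤ) : V → ℕ :=
  odometerVia A (fun i => i = z) s

/-- `ρ` is `z`-recurrent (Dhar's burning test): `ρ(z) = deg z`, `ρ(i) ≤ deg i - 1`
off the sink, and every site other than `z` topples exactly once in the
stabilization of `ρ + Δδ_z` with sink `z`. -/
def ZRec (A : V → V → ℕ) (z : V) (ρ : V → ℤ) : Prop :=
  ρ z = (deg A z : ℤ) ∧ (∀ i, i ≠ z → ρ i ≤ (deg A i : ℤ) - 1) ∧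
  ∃ l : List V, StabilizesTo A (fun i => i = z) (fun j => ρ j + lap A (delta z) j) l ∧
    ∀ i, i ≠ z → l.count i = 1

/-- `κ` = number of `z`-recurrent sandpiles. -/
def kappa (A : V → V → ℕ) (z : V) : ℕ := Nat.card {ρ : V → ℤ // ZRec A z ρ}

def totalMass (s : V → ℤ) : ℤ := ∑ i, s i

/-- Open addition operator `â_i` (with sink `z`). -/
def openAdd (A : V → V → ℕ) (z i : V) (ρ : V → ℤ) : V → ℤ :=
  fun j => if j = z then (deg A z : ℤ) else sinkStabilize A z (fun k => ρ k + delta i k) j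

/-- `â_i⁻¹` on `Rec(z)`. -/
def openAddInv (A : V → V → ℕ) (z i : V) (ρ : V → ℤ) : V → ℤ :=
  if h : ∃ ρ', ZRec A z ρ' ∧ openAdd A z i ρ' = ρ then h.choose else ρ

/-- Burst size `av_{i→z}(ρ) = |â_i⁻¹ρ| - |ρ| + 1`. -/
def burst (A : V → V → ℕ) (z i : V) (ρ : V → ℤ) : ℤ :=
  totalMass (openAddInv A z i ρ) - totalMass ρ + 1

/-- The `z`-recurrent decomposition `s = ρ + m·δ_z + Δv` with `ρ ∈ Rec(z)`, `v(z)=0`. -/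
def ZDecomp (A : V → V → ℕ) (z : V) (s ρ : V → ℤ) (m : ℤ) (v : V → ℤ) : Prop :=
  ZRec A z ρ ∧ v z = 0 ∧ ∀ j, s j = ρ j + m * delta z j + lap A v j

/-- `R_z(s)`: the `z`-recurrent representative of `s`. -/
def Rz (A : V → V → ℕ) (z : V) (s : V → ℤ) : V → ℤ :=
  if h : ∃ ρ, ∃ m, ∃ v, ZDecomp A z s ρ m v then h.choose else s

/-- `m_z(s)`: the integer in the `z`-recurrent decomposition of `s`. -/
def mz (A : V → V → ℕ) (z : V) (s : V → ℤ) : ℤ :=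
  if h : ∃ m, ∃ ρ, ∃ v, ZDecomp A z s ρ m v then h.choose else 0

/-- Closed addition operator `a_i`. -/
def closedAdd (A : V → V → ℕ) (i : V) (s : V → ℤ) : V → ℤ :=
  if Stabilizable A (fun j => s j + delta i j) then
    stabilizeVia A (fun _ => False) (fun j => s j + delta i j)
  else fun j => s j + delta i j

/-- The closed chain after making the additions listed in `w` (in order). -/
def chain (A : V → V → ℕ) (s0 : V → ℤ) (w : List V) : V → ℤ :=
  w.foldl (fun s i => closedAdd A i s) s0

/-- `w` is a threshold word for `s0`: the chain first becomes non-stabilizable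
exactly after the additions in `w`, i.e. `τ = |w|` on the cylinder of `w`. -/
def IsThresholdWord (A : V → V → ℕ) (s0 : V → ℤ) (w : List V) : Prop :=
  ¬ Stabilizable A (chain A s0 w) ∧
  ∀ w' : List V, w' <+: w → w' ≠ w → Stabilizable A (chain A s0 w')

def wordProb (α : V → ℝ) (w : List V) : ℝ := (w.map α).prod

/-- `P_{s0}(E at the threshold time)`: total probability of the (disjoint)
cylinders of threshold words satisfying `E`. -/
def thresholdProb (A : V → V → ℕ) (α : V → ℝ) (s0 : V → ℤ) (E : List V → Prop) : ℝ :=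
  ∑' w : List V, if IsThresholdWord A s0 w ∧ E w then wordProb α w else 0

/-- `E_{s0}[f at the threshold time]`. -/
def thresholdExp (A : V → V → ℕ) (α : V → ℝ) (s0 : V → ℤ) (f : List V → ℝ) : ℝ :=
  ∑' w : List V, if IsThresholdWord A s0 w then wordProb α w * f w else 0

end ThresholdState

/-!
Stabilizing adds the Laplacian of the odometer, so `a_i s = s + δ_i + Δu` and, off the sink,
`â_i ρ = ρ + δ_i + Δû`; since `Δ` kills constants on an Eulerian graph, the identity is linear
algebra once the burst size is known to be the number `δ_i(z) + Δû(z)` of chips reaching the sink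
and `â_i ρ` is known to be recurrent.

Recurrence of `â_i ρ`: from `ρ + δ_i + Δδ_z`, Dhar's burning sequence of `ρ` followed by the
stabilization of `ρ + δ_i`, and that stabilization followed by whatever is left, are two
stabilizing sequences; by the least action principle they are permutations of each other, so the
second tail fires every site off the sink once.

The burst size needs `â_i⁻¹ (â_i ρ) = ρ`, i.e. injectivity of `â_i` on `Rec(z)`. This is a
maximum principle: if `ρ'` is recurrent, `ρ` is stable off `z` and `ρ' = ρ + Δw` off `z` with
`w(z) = 0`, then `w ≤ 0`, because at the first firing of a maximizer of `w` in the burning test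
of `ρ'`, the pile there is `ρ + Δg` for a function `g` that is maximal at that vertex.
-/

theorem List.exists_eq_append_cons_of_exists_mem {α : Type*} {P : α → Prop} {l : List α}
    (h : ∃ x ∈ l, P x) : ∃ l₁ b l₂, l = l₁ ++ b :: l₂ ∧ P b ∧ ∀ x ∈ l₁, ¬ P x := by
  induction l with
  | nil => simp at h
  | cons a t ih =>
    by_cases ha : P a
    · exact ⟨[], a, t, rfl, ha, by simp⟩
    · obtain ⟨x, hx, hPx⟩ := h
      have hxt : x ∈ t := (List.mem_cons.1 hx).resolve_left (by rintro rfl; exact ha hPx)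
      obtain ⟨l₁, b, l₂, rfl, hb, hl₁⟩ := ih ⟨x, hxt, hPx⟩
      exact ⟨a :: l₁, b, l₂, rfl, hb, by simpa [ha] using hl₁⟩

namespace ThresholdState

theorem delta_self {V : Type*} [DecidableEq V] (z : V) : delta z z = 1 := if_pos rfl

theorem delta_of_ne {V : Type*} [DecidableEq V] {z j : V} (h : j ≠ z) : delta z j = 0 :=
  if_neg h

variable {V : Type*} [Fintype V] {A : V → V → ℕ}

section Laplacian

theorem lap_add (u w : V → ℤ) (j : V) :
    lap A (fun k => u k + w k) j = lap A u j + lap A w j := by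
  simp only [lap, mul_add, Finset.sum_add_distrib]; ring

theorem lap_sub (u w : V → ℤ) (j : V) :
    lap A (fun k => u k - w k) j = lap A u j - lap A w j := by
  simp only [lap, mul_sub, Finset.sum_sub_distrib]; ring

theorem lap_neg (w : V → ℤ) (j : V) : lap A (fun k => -w k) j = -lap A w j := by
  simp only [lap, mul_neg, Finset.sum_neg_distrib]; ring

theorem sum_indeg (hEul : Eulerian A) (j : V) : ∑ k, (A k j : ℤ) = deg A j := by
  rw [deg, hEul j, indeg]; push_cast; rfl

theorem lap_const (hEul : Eulerian A) (c : ℤ) (j : V) : lap A (fun _ => c) j = 0 := by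
  simp only [lap, ← Finset.sum_mul, sum_indeg hEul]; ring

theorem lap_add_sub_sub_const (hEul : Eulerian A) (v u w : V → ℤ) (c : ℤ) (j : V) :
    lap A (fun k => v k + u k - w k - c) j = lap A v j + lap A u j - lap A w j := by
  rw [lap_sub _ (fun _ => c), lap_const hEul, lap_sub, lap_add]; ring

theorem lap_nonpos_of_forall_le (hEul : Eulerian A) {g : V → ℤ} {b : V}
    (hg : ∀ k, g k ≤ g b) : lap A g b ≤ 0 := by
  have : ∑ k, (A k b : ℤ) * g k ≤ ∑ k, (A k b : ℤ) * g b :=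
    Finset.sum_le_sum fun k _ => mul_le_mul_of_nonneg_left (hg k) (by positivity)
  rw [← Finset.sum_mul, sum_indeg hEul] at this
  simp only [lap]; linarith

theorem sum_lap (u : V → ℤ) : ∑ j, lap A u j = 0 := by
  have hout : ∀ k, ∑ j, (A k j : ℤ) = deg A k := fun k => by simp [deg, outdeg]
  simp only [lap, Finset.sum_add_distrib]
  rw [Finset.sum_comm]
  simp only [← Finset.sum_mul, hout, ← Finset.sum_add_distrib]
  simp [mul_comm]

end Laplacian

variable [DecidableEq V]

section Toppling

theorem lap_delta (i j : V) :
    lap A (delta i) j = -(deg A j : ℤ) * (if j = i then 1 else 0) + A i j := by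
  simp only [lap, delta]
  rw [Finset.sum_eq_single i] <;> simp +contextual [eq_comm]

theorem lap_delta_of_ne {i j : V} (h : j ≠ i) : lap A (delta i) j = A i j := by
  simp [lap_delta, h]

theorem sum_delta (z : V) : ∑ j, delta z j = 1 := by
  simp [delta]

variable {F : V → Prop}

theorem applySeq_eq (l : List V) (s : V → ℤ) (j : V) :
    applySeq A s l j = s j + lap A (fun k => (l.count k : ℤ)) j := by
  induction l generalizing s with
  | nil => simp [applySeq, lap]
  | cons a t ih =>
    have hcount : (fun k => ((a :: t).count k : ℤ)) = fun k => delta a k + (t.count k : ℤ) := by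
      funext k
      by_cases hk : k = a <;> simp [delta, hk, Ne.symm, add_comm]
    change applySeq A (toppleAt A s a) t j = _
    rw [ih, hcount, lap_add, toppleAt]; ring

theorem applySeq_add (s t : V → ℤ) (l : List V) (j : V) :
    applySeq A (fun k => s k + t k) l j = applySeq A s l j + t j := by
  rw [applySeq_eq, applySeq_eq]; ring

theorem applySeq_append (s : V → ℤ) (l₁ l₂ : List V) :
    applySeq A s (l₁ ++ l₂) = applySeq A (applySeq A s l₁) l₂ :=
  List.foldl_append

theorem applySeq_perm {l l' : List V} (h : l.Perm l') (s : V → ℤ) :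
    applySeq A s l = applySeq A s l' := by
  funext j; simp only [applySeq_eq, h.count_eq]

theorem sum_applySeq (s : V → ℤ) (l : List V) : ∑ j, applySeq A s l j = ∑ j, s j := by
  simp only [applySeq_eq, Finset.sum_add_distrib, sum_lap, add_zero]

theorem le_toppleAt {s : V → ℤ} {a j : V} (h : j ≠ a) : s j ≤ toppleAt A s a j := by
  simp only [toppleAt, lap_delta_of_ne h]; omega

theorem le_applySeq_of_not_mem {s : V → ℤ} {a : V} {l : List V} (h : a ∉ l) :
    s a ≤ applySeq A s l a := by
  induction l generalizing s with
  | nil => exact le_rfl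
  | cons b t ih =>
    rw [List.mem_cons, not_or] at h
    exact (le_toppleAt h.1).trans (ih h.2)

theorem toppleAt_comm (s : V → ℤ) (a b : V) :
    toppleAt A (toppleAt A s a) b = toppleAt A (toppleAt A s b) a := by
  funext j; simp only [toppleAt]; ring

theorem validSeq_append {s : V → ℤ} {l₁ l₂ : List V} :
    ValidSeq A F s (l₁ ++ l₂) ↔ ValidSeq A F s l₁ ∧ ValidSeq A F (applySeq A s l₁) l₂ := by
  induction l₁ generalizing s with
  | nil => simp [ValidSeq, applySeq]
  | cons a t ih =>
    change (¬ F a ∧ _ ∧ ValidSeq A F _ (t ++ l₂)) ↔ (¬ F a ∧ _ ∧ _) ∧ _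
    rw [ih]; tauto

theorem validSeq_mono {s s' : V → ℤ} {l : List V} (h : ValidSeq A F s l)
    (hle : ∀ j, ¬ F j → s j ≤ s' j) : ValidSeq A F s' l := by
  induction l generalizing s s' with
  | nil => trivial
  | cons a t ih =>
    obtain ⟨hFa, hdeg, ht⟩ := h
    exact ⟨hFa, hdeg.trans (hle a hFa), ih ht fun j hj => add_le_add_left (hle j hj) _⟩

theorem count_eq_zero_of_validSeq {s : V → ℤ} {l : List V} (h : ValidSeq A F s l) {i : V}
    (hF : F i) : l.count i = 0 := by
  induction l generalizing s with
  | nil => rfl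
  | cons a t ih =>
    obtain ⟨hFa, -, ht⟩ := h
    have : a ≠ i := fun h => hFa (h ▸ hF)
    simp [this, ih ht]

theorem validSeq_cons_erase {s : V → ℤ} {l : List V} {i : V} (hl : ValidSeq A F s l)
    (hmem : i ∈ l) (hFi : ¬ F i) (hdeg : (deg A i : ℤ) ≤ s i) :
    ValidSeq A F s (i :: l.erase i) := by
  induction l generalizing s with
  | nil => simp at hmem
  | cons a t ih =>
    obtain ⟨hFa, hda, ht⟩ := hl
    by_cases hai : a = i
    · subst hai; rw [List.erase_cons_head]; exact ⟨hFi, hdeg, ht⟩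
    · have hit : i ∈ t := (List.mem_cons.1 hmem).resolve_left (Ne.symm hai)
      obtain ⟨-, -, htail⟩ := ih ht hit (hdeg.trans (le_toppleAt (Ne.symm hai)))
      rw [List.erase_cons_tail (by simpa using hai)]
      refine ⟨hFi, hdeg, hFa, hda.trans (le_toppleAt hai), ?_⟩
      rwa [← toppleAt_comm]

theorem StabilizesTo.append {s : V → ℤ} {l₁ l₂ : List V} (h₁ : ValidSeq A F s l₁)
    (h₂ : StabilizesTo A F (applySeq A s l₁) l₂) : StabilizesTo A F s (l₁ ++ l₂) :=
  ⟨validSeq_append.2 ⟨h₁, h₂.1⟩, by rw [applySeq_append]; exact h₂.2⟩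

theorem StabilizesTo.mem {s : V → ℤ} {l : List V} (h : StabilizesTo A F s l) {a : V}
    (hFa : ¬ F a) (ha : (deg A a : ℤ) ≤ s a) : a ∈ l := by
  by_contra hmem
  have := h.2 a hFa
  have := le_applySeq_of_not_mem (A := A) (s := s) hmem
  omega

theorem StabilizesTo.congr {s s' : V → ℤ} {l : List V} (h : StabilizesTo A F s l)
    (hss : ∀ j, ¬ F j → s j = s' j) : StabilizesTo A F s' l := by
  refine ⟨validSeq_mono h.1 fun j hj => (hss j hj).le, fun j hj => ?_⟩
  rw [applySeq_eq, ← hss j hj, ← applySeq_eq]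
  exact h.2 j hj

/-- Least action principle. -/
theorem ValidSeq.subperm {s : V → ℤ} {l l' : List V} (hl : ValidSeq A F s l)
    (hl' : StabilizesTo A F s l') : l.Subperm l' := by
  induction l generalizing s l' with
  | nil => exact List.nil_subperm
  | cons a t ih =>
    obtain ⟨hFa, hda, ht⟩ := hl
    have hmem := hl'.mem hFa hda
    have hperm := List.perm_cons_erase hmem
    have hexch := validSeq_cons_erase hl'.1 hmem hFa hda
    have htail : StabilizesTo A F (toppleAt A s a) (l'.erase a) :=
      ⟨hexch.2.2, by
        change StableOff A F (applySeq A s (a :: l'.erase a))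
        rw [← applySeq_perm hperm]; exact hl'.2⟩
    exact ((List.subperm_cons a).2 (ih ht htail)).trans hperm.symm.subperm

theorem StabilizesTo.perm {s : V → ℤ} {l l' : List V} (h : StabilizesTo A F s l)
    (h' : StabilizesTo A F s l') : l.Perm l' :=
  (h.1.subperm h').antisymm (h'.1.subperm h)

end Toppling

section Existence

variable {F : V → Prop}

theorem min_le_applySeq {s : V → ℤ} {l : List V} (h : ValidSeq A F s l) (k : V) :
    min (s k) 0 ≤ applySeq A s l k := by
  induction l generalizing s with
  | nil => exact min_le_left _ _
  | cons a t ih =>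
    obtain ⟨-, hdeg, ht⟩ := h
    refine le_trans (le_min ?_ (min_le_right _ _)) (ih ht)
    have : (0 : ℤ) ≤ A a k := by positivity
    simp only [toppleAt, lap_delta]
    split_ifs with hk
    · subst hk; have := min_le_right (s k) 0; linarith
    · have := min_le_left (s k) 0; linarith

/-- Firing never pushes a site below `min (s k) 0`, so mass conservation bounds every pile. -/
theorem applySeq_le {s : V → ℤ} {l : List V} (h : ValidSeq A F s l) (k : V) :
    applySeq A s l k ≤ ∑ j, s j - ∑ j, min (s j) 0 := by
  have hrest : ∑ j ∈ Finset.univ.erase k, min (s j) 0 ≤ ∑ j ∈ Finset.univ.erase k, applySeq A s l j :=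
    Finset.sum_le_sum fun j _ => min_le_applySeq h j
  rw [Finset.sum_erase_eq_sub (Finset.mem_univ k), Finset.sum_erase_eq_sub (Finset.mem_univ k),
    sum_applySeq] at hrest
  have := min_le_right (s k) 0
  linarith

/-- Induction along a path to the sink: if `k` fires at most `B` times and `A a k > 0`, each
firing of `a` sends a chip to `k`, and chips cannot pile up at `k` beyond the bound of
`applySeq_le`. -/
theorem exists_count_le_of_reachable (s : V → ℤ) {i z : V}
    (hpath : Relation.ReflTransGen (fun a b => 0 < A a b) i z) :
    ∃ B : ℤ, ∀ l, ValidSeq A (fun j => j = z) s l → (l.count i : ℤ) ≤ B := by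
  induction hpath using Relation.ReflTransGen.head_induction_on with
  | refl => exact ⟨0, fun l hl => by simp [count_eq_zero_of_validSeq hl rfl]⟩
  | @head a k hak _ ih =>
    obtain ⟨B, hB⟩ := ih
    refine ⟨deg A k * B + (∑ j, s j - ∑ j, min (s j) 0) - s k, fun l hl => ?_⟩
    have hk := applySeq_le hl k
    rw [applySeq_eq] at hk
    have hin : (A a k : ℤ) * l.count a ≤ ∑ j, (A j k : ℤ) * l.count j :=
      Finset.single_le_sum (f := fun j => (A j k : ℤ) * l.count j)
        (fun j _ => by positivity) (Finset.mem_univ a)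
    have hak' : (1 : ℤ) ≤ A a k := by exact_mod_cast hak
    have hca : (0 : ℤ) ≤ l.count a := by positivity
    have hdeg : (0 : ℤ) ≤ deg A k := by positivity
    have := mul_le_mul_of_nonneg_left (hB l hl) hdeg
    simp only [lap] at hk
    nlinarith

theorem stabilizableVia_of_length_le (n : ℕ) (s : V → ℤ)
    (h : ∀ l, ValidSeq A F s l → l.length ≤ n) : StabilizableVia A F s := by
  induction n generalizing s with
  | zero =>
    refine ⟨[], trivial, fun i hi => show s i ≤ _ from ?_⟩
    by_contra hu
    simpa using h [i] ⟨hi, by omega, trivial⟩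
  | succ n ih =>
    by_cases hst : StableOff A F s
    · exact ⟨[], trivial, hst⟩
    · obtain ⟨i, hi, hu⟩ : ∃ i, ¬ F i ∧ (deg A i : ℤ) ≤ s i := by
        simp only [StableOff, not_forall] at hst
        obtain ⟨i, hi, hu⟩ := hst
        exact ⟨i, hi, by omega⟩
      obtain ⟨l, hl, hstab⟩ :=
        ih (toppleAt A s i) fun l hl => by simpa using h (i :: l) ⟨hi, hu, hl⟩
      exact ⟨i :: l, ⟨hi, hu, hl⟩, hstab⟩

theorem length_eq_sum_count (l : List V) : (l.length : ℤ) = ∑ i, (l.count i : ℤ) := by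
  have := Multiset.sum_count_eq_card (s := Finset.univ) (m := (l : Multiset V))
    fun a _ => Finset.mem_univ a
  exact_mod_cast (by simpa using this.symm : l.length = ∑ i, l.count i)

theorem stabilizableVia_sink (hConn : Connected A) (z : V) (s : V → ℤ) :
    StabilizableVia A (fun j => j = z) s := by
  choose B hB using fun i => exists_count_le_of_reachable (A := A) s (hConn i z)
  refine stabilizableVia_of_length_le (∑ i, B i).toNat s fun l hl => ?_
  have := Finset.sum_le_sum fun i (_ : i ∈ Finset.univ) => hB i l hl
  have := length_eq_sum_count l
  omega

end Existence

section Stabilization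

variable {F : V → Prop}

theorem stabSeq_spec {s : V → ℤ} (h : StabilizableVia A F s) :
    StabilizesTo A F s (stabSeq A F s) := by
  rw [stabSeq, dif_pos h]; exact h.choose_spec

theorem stabilizeVia_of_not_stabilizableVia {s : V → ℤ} (h : ¬ StabilizableVia A F s) :
    stabilizeVia A F s = s := by
  simp [stabilizeVia, stabSeq, h, applySeq]

theorem stabilizeVia_eq (s : V → ℤ) (j : V) :
    stabilizeVia A F s j = s j + lap A (fun k => (odometerVia A F s k : ℤ)) j :=
  applySeq_eq _ s j

theorem sinkOdometer_self (z : V) (s : V → ℤ) : sinkOdometer A z s z = 0 := by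
  rw [sinkOdometer, odometerVia, stabSeq]
  split
  · next h => exact count_eq_zero_of_validSeq h.choose_spec.1 rfl
  · rfl

theorem closedAdd_eq_stabilizeVia (i : V) (s : V → ℤ) :
    closedAdd A i s = stabilizeVia A (fun _ => False) (fun j => s j + delta i j) := by
  unfold closedAdd Stabilizable
  split_ifs with h
  · rfl
  · exact (stabilizeVia_of_not_stabilizableVia h).symm

theorem openAdd_of_ne {z j : V} (i : V) (ρ : V → ℤ) (hj : j ≠ z) :
    openAdd A z i ρ j = ρ j + delta i j
      + lap A (fun k => (sinkOdometer A z (fun k => ρ k + delta i k) k : ℤ)) j := by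
  rw [openAdd, if_neg hj]; exact stabilizeVia_eq _ j

end Stabilization

section Recurrence

/-- Firing every site once changes nothing on an Eulerian graph. -/
theorem applySeq_burning (hEul : Eulerian A) {z : V} {l : List V} (hz : l.count z = 0)
    (hl : ∀ i, i ≠ z → l.count i = 1) (s : V → ℤ) :
    applySeq A (fun j => s j + lap A (delta z) j) l = s := by
  funext j
  have hone : (fun k => delta z k + (l.count k : ℤ)) = fun _ => 1 := by
    funext k; by_cases hk : k = z <;> simp [delta, hk, hz, hl]
  have := lap_add (A := A) (delta z) (fun k => (l.count k : ℤ)) j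
  rw [hone, lap_const hEul] at this
  rw [applySeq_eq]; linarith

theorem zrec_openAdd (hEul : Eulerian A) (hConn : Connected A) {z : V} (i : V) {ρ : V → ℤ}
    (hρ : ZRec A z ρ) : ZRec A z (openAdd A z i ρ) := by
  obtain ⟨-, -, l₀, hl₀, hcnt₀⟩ := hρ
  set σ : V → ℤ := fun k => ρ k + delta i k
  set p : V → ℤ := fun j => σ j + lap A (delta z) j
  have hσ := stabSeq_spec (stabilizableVia_sink hConn z σ)
  set l₁ := stabSeq A (fun j => j = z) σ
  have hstable : StableOff A (fun j => j = z) (openAdd A z i ρ) := fun j hj => by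
    rw [openAdd, if_neg hj]; exact hσ.2 j hj
  have hburn : ValidSeq A (fun j => j = z) p l₀ :=
    validSeq_mono hl₀.1 fun j _ => by simp only [p, σ, delta]; split_ifs <;> omega
  have hfirst : StabilizesTo A (fun j => j = z) p (l₀ ++ l₁) := by
    refine StabilizesTo.append hburn ?_
    rwa [applySeq_burning hEul (count_eq_zero_of_validSeq hl₀.1 rfl) hcnt₀]
  have hσp : ValidSeq A (fun j => j = z) p l₁ :=
    validSeq_mono hσ.1 fun j hj => by simp only [p, lap_delta_of_ne hj]; omega
  set q := applySeq A p l₁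
  have hq := stabSeq_spec (stabilizableVia_sink hConn z q)
  have hperm := hfirst.perm (StabilizesTo.append hσp hq)
  refine ⟨by simp [openAdd], hstable, _, hq.congr fun j hj => ?_, fun j hj => ?_⟩
  · simp only [q, p, applySeq_add]
    rw [openAdd, if_neg hj]; rfl
  · have := hperm.count_eq j
    simp only [List.count_append, hcnt₀ j hj] at this
    omega

theorem ZRec.nonpos_of_eq_add_lap (hEul : Eulerian A) {z : V} {ρ ρ' w : V → ℤ}
    (hρ' : ZRec A z ρ') (hρ : ∀ j, j ≠ z → ρ j ≤ deg A j - 1) (hwz : w z = 0)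
    (hw : ∀ j, j ≠ z → ρ' j = ρ j + lap A w j) (j : V) : w j ≤ 0 := by
  by_contra! hj
  obtain ⟨b₀, -, hmax⟩ := Finset.exists_max_image Finset.univ w ⟨j, Finset.mem_univ j⟩
  have hM : 0 < w b₀ := hj.trans_le (hmax j (Finset.mem_univ j))
  obtain ⟨-, -, l, hl, hcnt⟩ := hρ'
  have hb₀z : b₀ ≠ z := by rintro rfl; omega
  have hb₀ : b₀ ∈ l := List.count_pos_iff.1 (by rw [hcnt b₀ hb₀z]; omega)
  obtain ⟨l₁, b, l₂, rfl, hb, hl₁⟩ :=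
    List.exists_eq_append_cons_of_exists_mem (P := fun x => w x = w b₀) ⟨b₀, hb₀, rfl⟩
  have hbz : b ≠ z := by rintro rfl; omega
  obtain ⟨hv₁, -, hfire, -⟩ := validSeq_append.1 hl.1
  set g : V → ℤ := fun k => w k + delta z k + (l₁.count k : ℤ)
  have hcb : l₁.count b = 0 := List.count_eq_zero.2 fun h => hl₁ b h hb
  have hg : ∀ k, g k ≤ g b := fun k => by
    have hwk := hmax k (Finset.mem_univ k)
    change w k + delta z k + (l₁.count k : ℤ) ≤ w b + delta z b + (l₁.count b : ℤ)
    rw [delta_of_ne hbz, hcb, hb]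
    by_cases hk : k = z
    · rw [hk, hwz, delta_self, count_eq_zero_of_validSeq hv₁ rfl]; omega
    · have hle : l₁.count k ≤ 1 := hcnt k hk ▸ (List.sublist_append_left l₁ _).count_le k
      rw [delta_of_ne hk]
      by_cases hkM : w k = w b₀
      · rw [List.count_eq_zero.2 fun h => hl₁ k h hkM]; omega
      · omega
  have hval : applySeq A (fun j => ρ' j + lap A (delta z) j) l₁ b = ρ b + lap A g b := by
    simp only [applySeq_eq, g, lap_add, hw b hbz]; ring
  linarith [lap_nonpos_of_forall_le hEul hg, hρ b hbz]

theorem ZRec.eq_of_eq_add_lap (hEul : Eulerian A) {z : V} {ρ ρ' w : V → ℤ}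
    (hρ : ZRec A z ρ) (hρ' : ZRec A z ρ') (hwz : w z = 0)
    (hw : ∀ j, j ≠ z → ρ' j = ρ j + lap A w j) : ρ' = ρ := by
  have hle := hρ'.nonpos_of_eq_add_lap hEul hρ.2.1 hwz hw
  have hge := hρ.nonpos_of_eq_add_lap hEul hρ'.2.1 (w := fun k => -w k) (by simp [hwz])
    fun j hj => by rw [lap_neg, hw j hj]; ring
  have hw0 : w = fun _ => 0 := funext fun k => by linarith [hle k, hge k]
  funext j
  by_cases hj : j = z
  · rw [hj, hρ.1, hρ'.1]
  · rw [hw j hj, hw0, lap_const hEul, add_zero]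

theorem openAddInv_openAdd (hEul : Eulerian A) {z : V} (i : V) {ρ : V → ℤ}
    (hρ : ZRec A z ρ) : openAddInv A z i (openAdd A z i ρ) = ρ := by
  have hex : ∃ ρ', ZRec A z ρ' ∧ openAdd A z i ρ' = openAdd A z i ρ := ⟨ρ, hρ, rfl⟩
  obtain ⟨hρ', heq⟩ := hex.choose_spec
  rw [openAddInv, dif_pos hex]
  refine hρ.eq_of_eq_add_lap hEul hρ'
    (w := fun k => (sinkOdometer A z (fun k => ρ k + delta i k) k : ℤ)
      - sinkOdometer A z (fun k => hex.choose k + delta i k) k)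
    (by simp [sinkOdometer_self]) fun j hj => ?_
  have := congrFun heq j
  rw [openAdd_of_ne i _ hj, openAdd_of_ne i _ hj] at this
  rw [lap_sub]; linarith

theorem openAdd_add_mul_delta {z : V} (i : V) {ρ : V → ℤ} (hρz : ρ z = deg A z) (j : V) :
    openAdd A z i ρ j
        + (delta i z + lap A (fun k => (sinkOdometer A z (fun k => ρ k + delta i k) k : ℤ)) z)
          * delta z j
      = ρ j + delta i j
        + lap A (fun k => (sinkOdometer A z (fun k => ρ k + delta i k) k : ℤ)) j := by
  by_cases hj : j = z
  · subst hj; rw [openAdd, if_pos rfl, delta_self, hρz]; ring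
  · rw [openAdd_of_ne i ρ hj, delta_of_ne hj]; ring

theorem burst_openAdd (hEul : Eulerian A) {z : V} (i : V) {ρ : V → ℤ} (hρ : ZRec A z ρ) :
    burst A z i (openAdd A z i ρ)
      = delta i z + lap A (fun k => (sinkOdometer A z (fun k => ρ k + delta i k) k : ℤ)) z := by
  have hsum := Finset.sum_congr rfl fun j (_ : j ∈ Finset.univ) => openAdd_add_mul_delta i hρ.1 j
  simp only [Finset.sum_add_distrib, ← Finset.mul_sum, sum_delta, sum_lap] at hsum
  rw [burst, openAddInv_openAdd hEul i hρ, totalMass, totalMass]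
  linarith

end Recurrence

end ThresholdState

open ThresholdState in
/-- One step of the closed chain in terms of the `z`-recurrent decomposition:
if `s = ρ + m·δ_z + Δv` then
`a_i s = â_i ρ + (m + β)·δ_z + Δ(v + u - û - u(z))`, where `u` is the odometer
of `s + δ_i` (zero if not stabilizable), `û` is the sink-`z` odometer of
`ρ + δ_i`, and `β = av_{i→z}(â_i ρ)`. -/
theorem statement_9 {V : Type*} [Fintype V] [DecidableEq V]
    (A : V → V → ℕ) (hEul : Eulerian A) (hConn : Connected A)
    (i z : V) (s ρ : V → ℤ) (m : ℤ) (v : V → ℤ)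
    (hdec : ZDecomp A z s ρ m v) :
    ZDecomp A z (closedAdd A i s) (openAdd A z i ρ)
      (m + burst A z i (openAdd A z i ρ))
      (fun j => v j
        + (odometerVia A (fun _ => False) (fun k => s k + delta i k) j : ℤ)
        - (sinkOdometer A z (fun k => ρ k + delta i k) j : ℤ)
        - (odometerVia A (fun _ => False) (fun k => s k + delta i k) z : ℤ)) := by
  obtain ⟨hρ, hvz, hs⟩ := hdec
  refine ⟨zrec_openAdd hEul hConn i hρ, by simp [hvz, sinkOdometer_self], fun j => ?_⟩
  have hopen := openAdd_add_mul_delta i hρ.1 j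
  rw [closedAdd_eq_stabilizeVia, stabilizeVia_eq, hs j, burst_openAdd hEul i hρ,
    lap_add_sub_sub_const hEul]
  linarith
end
end

section
/- Stabilizability is monotone in the following two senses: (c) if a sandpile s is stabilizable, then s − Δv is stabilizable for every v : V → ℤ; and (d) if s ≤ s' pointwise and s' is stabilizable, then s is stabilizable. -/
open scoped BigOperators
open Classical Filter

noncomputable section

/-! A sandpile `s` is stabilizable iff `s + Δu ≤ deg - 1` for some `u ≥ 0`. A legal stabilizing
sequence supplies `u` as its toppling counts. Conversely, a vertex where `u = 0` only gains chips
under `Δu`, so every vertex unstable in `s` has `u > 0`; toppling it and decreasing `u` there by one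
preserves the condition, and `∑ u` bounds the length of the process. Monotonicity in `s` is then
immediate. On an Eulerian graph constants are harmonic, so `u ≥ 0` can be dropped from the
criterion, and `s - Δv` is handled by `u + v`. -/

namespace ThresholdState

variable {V : Type*} [Fintype V] (A : V → V → ℕ)

theorem lap_add_s18 (u v : V → ℤ) (i : V) : lap A (u + v) i = lap A u i + lap A v i := by
  simp only [lap, Pi.add_apply, mul_add, Finset.sum_add_distrib]
  ring

theorem lap_sub_s18 (u v : V → ℤ) (i : V) : lap A (u - v) i = lap A u i - lap A v i := by
  simp only [lap, Pi.sub_apply, mul_sub, Finset.sum_sub_distrib]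
  ring

theorem lap_const_of_eulerian (hA : Eulerian A) (c : ℤ) (i : V) :
    lap A (fun _ => c) i = 0 := by
  have hindeg : ∑ j, (A j i : ℤ) = deg A i := by
    rw [deg, hA i, indeg, Nat.cast_sum]
  simp only [lap, ← Finset.sum_mul, hindeg]
  ring

theorem lap_nonneg_of_eq_zero {u : V → ℤ} (hu : 0 ≤ u) {i : V} (hi : u i = 0) :
    0 ≤ lap A u i := by
  simp only [lap, hi, mul_zero, zero_add]
  exact Finset.sum_nonneg fun j _ => mul_nonneg (Int.natCast_nonneg _) (hu j)

theorem pos_of_add_lap_le {s u : V → ℤ} (hu0 : 0 ≤ u) {i : V}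
    (hu : s i + lap A u i ≤ deg A i - 1) (hi : (deg A i : ℤ) ≤ s i) : 0 < u i := by
  by_contra! h
  have := lap_nonneg_of_eq_zero A hu0 (le_antisymm h (hu0 i))
  omega

variable [DecidableEq V]

theorem applySeq_apply (s : V → ℤ) (l : List V) (j : V) :
    applySeq A s l j = s j + lap A (fun k => (l.count k : ℤ)) j := by
  induction l generalizing s with
  | nil => simp [applySeq, lap]
  | cons i l ih =>
    have hcount : (fun k => ((i :: l).count k : ℤ)) = (fun k => (l.count k : ℤ)) + delta i := by
      funext k
      by_cases hk : k = i <;> simp [delta, hk, Ne.symm]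
    change applySeq A (toppleAt A s i) l j = _
    rw [ih, hcount, lap_add_s18, toppleAt]
    ring

theorem toppleAt_add_lap_sub_delta (s u : V → ℤ) (i j : V) :
    toppleAt A s i j + lap A (u - delta i) j = s j + lap A u j := by
  rw [toppleAt, lap_sub_s18]
  ring

theorem stabilizable_of_add_lap_le {s u : V → ℤ} (hu0 : 0 ≤ u)
    (hu : ∀ i, s i + lap A u i ≤ deg A i - 1) : Stabilizable A s := by
  obtain ⟨n, hn⟩ : ∃ n : ℕ, ∑ i, u i = n :=
    Int.eq_ofNat_of_zero_le (Finset.sum_nonneg fun i _ => hu0 i)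
  induction n using Nat.strong_induction_on generalizing s u with
  | _ n ih =>
    by_cases hstable : ∀ i, s i ≤ deg A i - 1
    · exact ⟨[], trivial, fun i _ => hstable i⟩
    push Not at hstable
    obtain ⟨i, hi⟩ := hstable
    have hui : 0 < u i := pos_of_add_lap_le A hu0 (hu i) (by omega)
    have hu'0 : 0 ≤ u - delta i := fun k => by
      rcases eq_or_ne k i with rfl | hk
      · simp only [delta, Pi.sub_apply, if_pos, Pi.zero_apply]
        omega
      · simpa [delta, hk] using hu0 k
    have hsum : ∑ k, (u - delta i) k = n - 1 := by
      simp [Finset.sum_sub_distrib, hn, delta]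
    have hsum_nonneg : 0 ≤ ∑ k, (u - delta i) k := Finset.sum_nonneg fun k _ => hu'0 k
    obtain ⟨l, hl, hstab⟩ := ih (n - 1) (by omega) hu'0
      (fun j => (toppleAt_add_lap_sub_delta A s u i j).symm ▸ hu j) (by omega)
    exact ⟨i :: l, ⟨not_false, by omega, hl⟩, hstab⟩

theorem stabilizable_iff_exists_add_lap_le (s : V → ℤ) :
    Stabilizable A s ↔ ∃ u : V → ℤ, 0 ≤ u ∧ ∀ i, s i + lap A u i ≤ deg A i - 1 := by
  refine ⟨fun ⟨l, _, hl⟩ => ?_, fun ⟨u, hu0, hu⟩ => stabilizable_of_add_lap_le A hu0 hu⟩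
  exact ⟨fun k => l.count k, fun k => by positivity,
    fun i => applySeq_apply A s l i ▸ hl i not_false⟩

theorem stabilizable_iff_exists_add_lap_le_of_eulerian (hA : Eulerian A) (s : V → ℤ) :
    Stabilizable A s ↔ ∃ u : V → ℤ, ∀ i, s i + lap A u i ≤ deg A i - 1 := by
  rw [stabilizable_iff_exists_add_lap_le]
  refine ⟨fun ⟨u, _, hu⟩ => ⟨u, hu⟩, fun ⟨u, hu⟩ => ?_⟩
  obtain ⟨b, hb⟩ := (Set.finite_range u).bddBelow
  refine ⟨u - fun _ => b, fun k => sub_nonneg.2 (hb ⟨k, rfl⟩), fun i => ?_⟩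
  rw [lap_sub_s18, lap_const_of_eulerian A hA, sub_zero]
  exact hu i

variable {A}

theorem Stabilizable.sub_lap (hA : Eulerian A) {s : V → ℤ} (hs : Stabilizable A s)
    (v : V → ℤ) : Stabilizable A (fun j => s j - lap A v j) := by
  obtain ⟨u, hu⟩ := (stabilizable_iff_exists_add_lap_le_of_eulerian A hA s).1 hs
  refine (stabilizable_iff_exists_add_lap_le_of_eulerian A hA _).2 ⟨u + v, fun i => ?_⟩
  rw [lap_add_s18]
  linarith [hu i]

theorem Stabilizable.of_le {s s' : V → ℤ} (hle : ∀ i, s i ≤ s' i) (hs' : Stabilizable A s') :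
    Stabilizable A s := by
  obtain ⟨u, hu0, hu⟩ := (stabilizable_iff_exists_add_lap_le A s').1 hs'
  exact stabilizable_of_add_lap_le A hu0 fun i => by linarith [hle i, hu i]

end ThresholdState

open ThresholdState in
theorem statement_18_general {V : Type*} [Fintype V] [DecidableEq V]
    (A : V → V → ℕ) (hEul : Eulerian A) :
    (∀ s : V → ℤ, Stabilizable A s →
      ∀ v : V → ℤ, Stabilizable A (fun j => s j - lap A v j)) ∧
    (∀ s s' : V → ℤ, (∀ i, s i ≤ s' i) → Stabilizable A s' → Stabilizable A s) :=
  ⟨fun _ hs v => hs.sub_lap hEul v, fun _ _ hle hs' => hs'.of_le hle⟩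

open ThresholdState in
/-- Monotonicity of stabilizability: (c) if `s` is stabilizable then so is
`s - Δv` for every `v : V → ℤ`; (d) if `s ≤ s'` pointwise and `s'` is
stabilizable then so is `s`. -/
theorem statement_18 {V : Type*} [Fintype V] [DecidableEq V]
    (A : V → V → ℕ) (hEul : Eulerian A) (hConn : Connected A) :
    (∀ s : V → ℤ, Stabilizable A s →
      ∀ v : V → ℤ, Stabilizable A (fun j => s j - lap A v j)) ∧
    (∀ s s' : V → ℤ, (∀ i, s i ≤ s' i) → Stabilizable A s' → Stabilizable A s) :=
  statement_18_general A hEul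
end
end
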